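/- arXiv:0904.1705 — 2 statements merged into one kernel-verified Lean document; each statement's English description precedes it below -/
import Mathlib

section
/- Let G be a finite simple bipartite graph with at least one edge and let b be a positive integer. If a nice b-bounded edge coloring of G has k color classes and some b-bounded proper edge coloring of G has k' color classes, then k ≤ (3 − 2/√b)·k'. -/
open Finset

/-- `⌈a / b⌉` for natural numbers. -/
def natCeilDiv (a b : ℕ) : ℕ := (a + b - 1) / b

/-- `P` is the ordered `b`-partition of `S` (w.r.t. weights `w`): the blocks are pairwise
disjoint, cover `S`, each has at most `b` elements, earlier blocks consist of heavier
elements, and all blocks except possibly the last have exactly `b` elements. -/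
def IsOrderedBPartition {β : Type*} [DecidableEq β] (w : β → ℕ) (b : ℕ) (S : Finset β)
    {k : ℕ} (P : Fin k → Finset β) : Prop :=
  (∀ i j : Fin k, i ≠ j → Disjoint (P i) (P j)) ∧
  Finset.univ.biUnion P = S ∧
  (∀ i, (P i).card ≤ b) ∧
  (∀ i j : Fin k, i < j → ∀ x ∈ P i, ∀ y ∈ P j, w y ≤ w x) ∧
  (∀ i j : Fin k, i < j → (P i).card = b)

/-- A `b`-bounded proper vertex coloring of `G` with color classes `C i`:
a partition of the vertex set into independent sets, each of cardinality at most `b`. -/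
def IsBddProperVC {α : Type*} (G : SimpleGraph α) (b : ℕ)
    {ι : Type*} (C : ι → Finset α) : Prop :=
  (∀ v : α, ∃! i, v ∈ C i) ∧
  (∀ i, ∀ u ∈ C i, ∀ v ∈ C i, ¬ G.Adj u v) ∧
  (∀ i, (C i).card ≤ b)

/-- A proper edge coloring of `G` with color classes `C i`: a partition of the edge set
into matchings. -/
def IsProperEC {α : Type*} [Fintype α] [DecidableEq α] (G : SimpleGraph α) [DecidableRel G.Adj]
    {ι : Type*} (C : ι → Finset (Sym2 α)) : Prop :=
  (∀ e ∈ G.edgeFinset, ∃! i, e ∈ C i) ∧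
  (∀ i, C i ⊆ G.edgeFinset) ∧
  (∀ i, ∀ e ∈ C i, ∀ f ∈ C i, e ≠ f → ¬ ∃ v, v ∈ e ∧ v ∈ f)

/-- A `b`-bounded proper edge coloring: a proper edge coloring each of whose classes has
cardinality at most `b`. -/
def IsBddProperEC {α : Type*} [Fintype α] [DecidableEq α] (G : SimpleGraph α) [DecidableRel G.Adj]
    (b : ℕ) {ι : Type*} (C : ι → Finset (Sym2 α)) : Prop :=
  IsProperEC G C ∧ ∀ i, (C i).card ≤ b

/-- A nice `b`-bounded edge coloring: a sequence `C 0, …, C (k-1)` of (nonempty) pairwise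
disjoint matchings of `G` covering `E(G)`, each of cardinality at most `b`, such that each
`C i` has cardinality exactly `b` or is a maximal matching of the subgraph of `G` with edge
set `E(G) \ (C 0 ∪ … ∪ C (i-1))`. -/
def IsNiceBddEC {α : Type*} [Fintype α] [DecidableEq α] (G : SimpleGraph α) [DecidableRel G.Adj]
    (b : ℕ) {k : ℕ} (C : Fin k → Finset (Sym2 α)) : Prop :=
  IsBddProperEC G b C ∧
  (∀ i, (C i).Nonempty) ∧
  (∀ i : Fin k, (C i).card = b ∨
    ∀ e ∈ G.edgeFinset, (∀ j, j ≤ i → e ∉ C j) → ∃ f ∈ C i, ∃ v, v ∈ e ∧ v ∈ f)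

/-- A greedy (first-fit) `b`-bounded edge coloring of `G`: a `b`-bounded proper edge coloring
`C` together with an enumeration `e` of the edges in nonincreasing order of weight and a color
assignment `c` with `e j ∈ C (c j)`, such that each edge is placed in the first color that is
not full and contains no adjacent edge at the moment of placement. -/
def IsGreedyEC {α : Type*} [Fintype α] [DecidableEq α] (G : SimpleGraph α) [DecidableRel G.Adj]
    (w : Sym2 α → ℕ) (b : ℕ) {k m : ℕ} (C : Fin k → Finset (Sym2 α))
    (e : Fin m → Sym2 α) (c : Fin m → Fin k) : Prop :=
  IsBddProperEC G b C ∧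
  Function.Injective e ∧
  (∀ f, f ∈ G.edgeFinset ↔ ∃ j, e j = f) ∧
  (∀ j j' : Fin m, j ≤ j' → w (e j') ≤ w (e j)) ∧
  (∀ j, e j ∈ C (c j)) ∧
  (∀ j : Fin m, ∀ i : Fin k, i < c j →
    ((Finset.univ.filter fun l : Fin m => l < j ∧ c l = i)).card = b ∨
      ∃ l : Fin m, l < j ∧ c l = i ∧ e l ≠ e j ∧ ∃ v, v ∈ e l ∧ v ∈ e j)

/-!
Let `uv` be an edge of the last class of the nice colouring. Every earlier class that is not
full is a maximal matching of the still uncoloured edges, which include `uv`, so it touches `u`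
or `v`; the classes touching `u` use distinct edges at `u`, so fewer than `k'` of them do, and
likewise for `v`. If a non-full class touches `u` but not `v`, each later class touching `v` but
not `u` forces a further edge into it (distinct ones, by bipartiteness), so `x` classes touching
only `u` and `y` touching only `v` contain at least `x + y + xy` edges. Comparing the number of
edges with `k' b` and optimising over `x` and `y` gives the bound.
-/

section

variable {α : Type*} [DecidableEq α]

def touching {ι : Type*} [Fintype ι] (C : ι → Finset (Sym2 α)) (u : α) : Finset ι :=
  {i | ∃ f ∈ C i, u ∈ f}

@[simp]
theorem mem_touching {ι : Type*} [Fintype ι] {C : ι → Finset (Sym2 α)} {u : α} {i : ι} :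
    i ∈ touching C u ↔ ∃ f ∈ C i, u ∈ f := by
  simp [touching]

variable [Fintype α] {G : SimpleGraph α} [DecidableRel G.Adj]

namespace IsProperEC

variable {ι : Type*} {C : ι → Finset (Sym2 α)}

theorem eq_of_mem (hC : IsProperEC G C) {e : Sym2 α} {i j : ι} (hi : e ∈ C i) (hj : e ∈ C j) :
    i = j := by
  obtain ⟨_, -, h⟩ := hC.1 e (hC.2.1 i hi)
  exact (h i hi).trans (h j hj).symm

theorem sum_card_eq [Fintype ι] (hC : IsProperEC G C) : ∑ i, #(C i) = #G.edgeFinset := by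
  rw [← card_biUnion fun i _ j _ hij ↦ disjoint_left.2 fun e hi hj ↦ hij (hC.eq_of_mem hi hj)]
  congr 1
  ext e
  simp only [mem_biUnion, mem_univ, true_and]
  exact ⟨fun ⟨i, hi⟩ ↦ hC.2.1 i hi, fun he ↦ (hC.1 e he).exists⟩

theorem degree_le_card [Fintype ι] (hC : IsProperEC G C) (u : α) :
    G.degree u ≤ Fintype.card ι := by
  rw [← G.card_incidenceFinset_eq_degree, ← card_univ]
  refine card_le_card_of_forall_subsingleton (fun e i ↦ e ∈ C i) (fun e he ↦ ?_) ?_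
  · obtain ⟨i, hi, -⟩ := hC.1 e (G.mem_edgeFinset.2 ((G.mem_incidenceFinset u e).1 he).1)
    exact ⟨i, mem_univ i, hi⟩
  · rintro i - e ⟨he, hei⟩ f ⟨hf, hfi⟩
    by_contra hef
    exact hC.2.2 i e hei f hfi hef
      ⟨u, ((G.mem_incidenceFinset u e).1 he).2, ((G.mem_incidenceFinset u f).1 hf).2⟩

end IsProperEC

theorem IsBddProperEC.card_edgeFinset_le {b : ℕ} {ι : Type*} [Fintype ι]
    {C : ι → Finset (Sym2 α)} (hC : IsBddProperEC G b C) :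
    #G.edgeFinset ≤ Fintype.card ι * b := by
  rw [← hC.1.sum_card_eq, ← smul_eq_mul, ← card_univ, ← sum_const]
  exact sum_le_sum fun i _ ↦ hC.2 i

theorem eq_of_mem_edge_of_iff {U : Set α} (hbip : ∀ u v : α, G.Adj u v → (u ∈ U ↔ v ∉ U))
    {e : Sym2 α} (he : e ∈ G.edgeFinset) {a a' : α} (ha : a ∈ e) (ha' : a' ∈ e)
    (hside : a ∈ U ↔ a' ∈ U) : a = a' := by
  by_contra hne
  rw [(Sym2.mem_and_mem_iff hne).1 ⟨ha, ha'⟩, SimpleGraph.mem_edgeFinset,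
    SimpleGraph.mem_edgeSet] at he
  have := hbip a a' he
  tauto

theorem IsProperEC.card_touching_le_degree {ι : Type*} [Fintype ι] {C : ι → Finset (Sym2 α)}
    (hC : IsProperEC G C) (u : α) : #(touching C u) ≤ G.degree u := by
  rw [← G.card_incidenceFinset_eq_degree]
  refine card_le_card_of_forall_subsingleton (fun i e ↦ e ∈ C i) (fun i hi ↦ ?_) ?_
  · obtain ⟨f, hf, huf⟩ := mem_touching.1 hi
    exact ⟨f, (G.mem_incidenceFinset u f).2 ⟨G.mem_edgeFinset.1 (hC.2.1 i hf), huf⟩, hf⟩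
  · rintro e - i ⟨-, hi⟩ j ⟨-, hj⟩
    exact hC.eq_of_mem hi hj

/-- For a matching `C i` of the edges not coloured by `C 0, …, C (i - 1)`, this says that it is
a maximal one. -/
def CoversRemaining {k : ℕ} (G : SimpleGraph α) [DecidableRel G.Adj]
    (C : Fin k → Finset (Sym2 α)) (i : Fin k) : Prop :=
  ∀ e ∈ G.edgeFinset, (∀ j, j ≤ i → e ∉ C j) → ∃ f ∈ C i, ∃ v, v ∈ e ∧ v ∈ f

namespace CoversRemaining

variable {k : ℕ} {C : Fin k → Finset (Sym2 α)} {i : Fin k}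

theorem exists_mem_of_lt (hi : CoversRemaining G C i) (hC : IsProperEC G C) {e : Sym2 α}
    {j : Fin k} (hij : i < j) (he : e ∈ C j) : ∃ f ∈ C i, ∃ v, v ∈ e ∧ v ∈ f :=
  hi e (hC.2.1 j he) fun _ hl hl' ↦ (hl.trans_lt hij).ne (hC.eq_of_mem hl' he)

theorem mem_touching_or (hi : CoversRemaining G C i) (hC : IsProperEC G C) {u v : α}
    {j : Fin k} (hij : i < j) (he : s(u, v) ∈ C j) :
    i ∈ touching C u ∨ i ∈ touching C v := by
  obtain ⟨f, hf, w, hw, hwf⟩ := hi.exists_mem_of_lt hC hij he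
  rcases Sym2.mem_iff.1 hw with rfl | rfl
  · exact Or.inl (mem_touching.2 ⟨f, hf, hwf⟩)
  · exact Or.inr (mem_touching.2 ⟨f, hf, hwf⟩)

/-- A later class `j` touching `v` but not `u` contains an edge `vt` with `t ≠ u`; that edge is
still uncoloured at step `i`, so `C i` has an edge at `t`. The vertices `t` lie on the side
of `u`, so these edges of `C i` are distinct from each other and from the edge of `C i` at `u`. -/
theorem card_filter_lt_add_one_le {U : Set α}
    (hbip : ∀ u v : α, G.Adj u v → (u ∈ U ↔ v ∉ U)) (hi : CoversRemaining G C i)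
    (hC : IsProperEC G C) {u v : α} (huv : G.Adj u v) (hu : i ∈ touching C u)
    (hv : i ∉ touching C v) :
    #{j ∈ touching C v \ touching C u | i < j} + 1 ≤ #(C i) := by
  obtain ⟨fu, hfu, hufu⟩ := mem_touching.1 hu
  have hside : ∀ t, G.Adj v t → (t ∈ U ↔ u ∈ U) := fun t hvt ↦ by
    have := hbip u v huv; have := hbip v t hvt; tauto
  have hcover : ∀ j ∈ {j ∈ touching C v \ touching C u | i < j},
      ∃ g ∈ (C i).erase fu, ∃ t, s(v, t) ∈ C j ∧ t ∈ g := by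
    intro j hj
    simp only [mem_filter, mem_sdiff, mem_touching, not_exists, not_and] at hj
    obtain ⟨⟨⟨f, hf, hvf⟩, hnu⟩, hij⟩ := hj
    obtain ⟨t, rfl⟩ := Sym2.mem_iff_exists.1 hvf
    obtain ⟨g, hg, w, hw, hwg⟩ := hi.exists_mem_of_lt hC hij hf
    obtain rfl : w = t := (Sym2.mem_iff.1 hw).resolve_left
      (by rintro rfl; exact hv (mem_touching.2 ⟨g, hg, hwg⟩))
    refine ⟨g, mem_erase.2 ⟨?_, hg⟩, w, hf, hwg⟩
    rintro rfl
    have hvw : G.Adj v w := G.mem_edgeFinset.1 (hC.2.1 j hf)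
    obtain rfl := eq_of_mem_edge_of_iff hbip (hC.2.1 i hg) hwg hufu (hside w hvw)
    exact hnu _ hf (Sym2.mem_mk_right v w)
  have hcard := card_le_card_of_forall_subsingleton _ hcover fun g hg ↦ by
    rintro j ⟨-, t, hjt, htg⟩ j' ⟨-, t', hjt', htg'⟩
    have hg' := hC.2.1 i (mem_erase.1 hg).2
    obtain rfl := eq_of_mem_edge_of_iff hbip hg' htg htg'
      ((hside t (G.mem_edgeFinset.1 (hC.2.1 j hjt))).trans
        (hside t' (G.mem_edgeFinset.1 (hC.2.1 j' hjt'))).symm)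
    exact hC.eq_of_mem hjt hjt'
  rw [card_erase_of_mem hfu] at hcard
  have := card_pos.2 ⟨fu, hfu⟩
  omega

end CoversRemaining

section Counting

variable {ι : Type*} [LinearOrder ι]

theorem card_mul_card_le_sum_card_filter_lt {X Y : Finset ι} (hXY : Disjoint X Y) :
    #X * #Y ≤ ∑ i ∈ X, #{j ∈ Y | i < j} + ∑ j ∈ Y, #{i ∈ X | j < i} := by
  have hswap := sum_card_bipartiteAbove_eq_sum_card_bipartiteBelow (s := X) (t := Y)
    fun i j ↦ j < i
  simp only [bipartiteAbove, bipartiteBelow] at hswap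
  rw [← hswap, ← sum_add_distrib, ← smul_eq_mul, ← sum_const]
  refine sum_le_sum fun i hi ↦ (card_le_card fun j hj ↦ ?_).trans (card_union_le _ _)
  have hij : i ≠ j := fun h ↦ disjoint_left.1 hXY hi (h ▸ hj)
  rcases hij.lt_or_gt with h | h
  · exact mem_union_left _ (mem_filter.2 ⟨hj, h⟩)
  · exact mem_union_right _ (mem_filter.2 ⟨hj, h⟩)

variable {N A B : Finset ι}

theorem sum_sdiff_add_sum_sdiff_add_sum_inter {M : Type*} [AddCommMonoid M] (hN : N ⊆ A ∪ B)
    (w : ι → M) :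
    ∑ i ∈ N \ B, w i + ∑ i ∈ N \ A, w i + ∑ i ∈ N ∩ A ∩ B, w i = ∑ i ∈ N, w i := by
  have hNBA : (N ∩ B) \ A = N \ A := by
    ext i
    have := @hN i
    simp only [mem_sdiff, mem_inter, mem_union] at this ⊢
    tauto
  rw [← sum_inter_add_sum_sdiff N B, ← sum_inter_add_sum_sdiff (N ∩ B) A, hNBA,
    inter_right_comm]
  abel

theorem card_sdiff_add_card_sdiff_add_card_inter (hN : N ⊆ A ∪ B) :
    #(N \ B) + #(N \ A) + #(N ∩ A ∩ B) = #N := by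
  simpa only [card_eq_sum_ones] using sum_sdiff_add_sum_sdiff_add_sum_inter hN fun _ ↦ 1

theorem add_add_mul_add_le_sum (hN : N ⊆ A ∪ B) {w : ι → ℕ}
    (hX : ∀ i ∈ N \ B, #{j ∈ N \ A | i < j} + 1 ≤ w i)
    (hY : ∀ i ∈ N \ A, #{j ∈ N \ B | i < j} + 1 ≤ w i)
    (hAB : ∀ i ∈ N ∩ A ∩ B, 2 ≤ w i) :
    #(N \ B) + #(N \ A) + #(N \ B) * #(N \ A) + 2 * #(N ∩ A ∩ B) ≤ ∑ i ∈ N, w i := by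
  have hdisj : Disjoint (N \ B) (N \ A) := disjoint_left.2 fun i hiB hiA ↦ by
    have := hN (mem_sdiff.1 hiB).1
    simp_all
  have hpairs := card_mul_card_le_sum_card_filter_lt hdisj
  have hsumX := sum_le_sum hX
  have hsumY := sum_le_sum hY
  have hsumAB := sum_le_sum hAB
  rw [← sum_sdiff_add_sum_sdiff_add_sum_inter hN]
  simp only [sum_add_distrib, sum_const, smul_eq_mul] at hsumX hsumY hsumAB
  omega

end Counting

/-- `x`, `y`, `z` count the classes of `N` touching only `u`, only `v`, and both. -/
theorem IsProperEC.exists_card_bounds {U : Set α}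
    (hbip : ∀ u v : α, G.Adj u v → (u ∈ U ↔ v ∉ U)) {m : ℕ} {C : Fin m → Finset (Sym2 α)}
    (hC : IsProperEC G C) {ι : Type*} [Fintype ι] {C' : ι → Finset (Sym2 α)}
    (hC' : IsProperEC G C') {u v : α} {l : Fin m} (hl : s(u, v) ∈ C l) {N : Finset (Fin m)}
    (hN : ∀ i ∈ N, i < l ∧ CoversRemaining G C i) :
    ∃ x y z : ℕ, #N = x + y + z ∧ x + y + x * y + 2 * z ≤ ∑ i ∈ N, #(C i) ∧
      x + z + 1 ≤ Fintype.card ι ∧ y + z + 1 ≤ Fintype.card ι := by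
  have huv : G.Adj u v := G.mem_edgeFinset.1 (hC.2.1 l hl)
  have htouch : ∀ i ∈ N, i ∈ touching C u ∨ i ∈ touching C v := fun i hi ↦
    (hN i hi).2.mem_touching_or hC (hN i hi).1 hl
  have hlater : ∀ {p q : α}, G.Adj p q → (∀ i ∈ N, i ∈ touching C p ∨ i ∈ touching C q) →
      ∀ i ∈ N \ touching C q, #{j ∈ N \ touching C p | i < j} + 1 ≤ #(C i) := by
    intro p q hpq hpq' i hi
    obtain ⟨hiN, hiq⟩ := mem_sdiff.1 hi
    have hsub : N \ touching C p ⊆ touching C q \ touching C p := fun j hj ↦ by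
      obtain ⟨hjN, hjp⟩ := mem_sdiff.1 hj
      exact mem_sdiff.2 ⟨(hpq' j hjN).resolve_left hjp, hjp⟩
    exact le_trans (Nat.add_le_add_right (card_le_card (filter_subset_filter _ hsub)) 1)
      ((hN i hiN).2.card_filter_lt_add_one_le hbip hC hpq ((hpq' i hiN).resolve_right hiq) hiq)
  have hboth : ∀ i ∈ N ∩ touching C u ∩ touching C v, 2 ≤ #(C i) := by
    intro i hi
    simp only [mem_inter, mem_touching] at hi
    obtain ⟨⟨hiN, fu, hfu, hufu⟩, fv, hfv, hvfv⟩ := hi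
    refine one_lt_card.2 ⟨fu, hfu, fv, hfv, ?_⟩
    rintro rfl
    rw [(Sym2.mem_and_mem_iff huv.ne).1 ⟨hufu, hvfv⟩] at hfu
    exact (hN i hiN).1.ne (hC.eq_of_mem hfu hl)
  have hbudget : ∀ {p : α}, p ∈ s(u, v) → #(N ∩ touching C p) + 1 ≤ Fintype.card ι := by
    intro p hp
    have hl_notMem : l ∉ N ∩ touching C p := fun h ↦ (hN l (mem_inter.1 h).1).1.false
    calc #(N ∩ touching C p) + 1 = #(insert l (N ∩ touching C p)) :=
          (card_insert_of_notMem hl_notMem).symm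
      _ ≤ #(touching C p) :=
          card_le_card (insert_subset (mem_touching.2 ⟨_, hl, hp⟩) inter_subset_right)
      _ ≤ Fintype.card ι := (hC.card_touching_le_degree p).trans (hC'.degree_le_card p)
  have hcover : N ⊆ touching C u ∪ touching C v := fun i hi ↦ mem_union.2 (htouch i hi)
  have hsum := add_add_mul_add_le_sum hcover (hlater huv htouch)
    (hlater huv.symm fun i hi ↦ (htouch i hi).symm) hboth
  have hsplit := card_sdiff_add_card_sdiff_add_card_inter hcover
  have hu := hbudget (Sym2.mem_mk_left u v)
  have hv := hbudget (Sym2.mem_mk_right u v)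
  have hNu := card_inter_add_card_sdiff N (touching C u)
  have hNv := card_inter_add_card_sdiff N (touching C v)
  exact ⟨_, _, _, hsplit.symm, hsum, by omega, by omega⟩

theorem IsNiceBddEC.exists_card_bounds {U : Set α}
    (hbip : ∀ u v : α, G.Adj u v → (u ∈ U ↔ v ∉ U)) {b n k' : ℕ}
    {C : Fin (n + 1) → Finset (Sym2 α)} (hC : IsNiceBddEC G b C)
    {C' : Fin k' → Finset (Sym2 α)} (hC' : IsBddProperEC G b C') :
    ∃ F x y z : ℕ, n = F + x + y + z ∧ F * b + ((x + 1) * (y + 1) + 2 * z) ≤ k' * b ∧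
      x + z + 1 ≤ k' ∧ y + z + 1 ≤ k' := by
  obtain ⟨⟨hCp, -⟩, hne, hnice⟩ := hC
  obtain ⟨⟨u, v⟩, hl⟩ := hne (Fin.last n)
  set R := univ.erase (Fin.last n)
  obtain ⟨x, y, z, hN, hsum, hu, hv⟩ := hCp.exists_card_bounds hbip hC'.1 hl
    (N := {i ∈ R | #(C i) ≠ b}) fun i hi ↦
      ⟨Fin.lt_last_iff_ne_last.2 (ne_of_mem_erase (mem_filter.1 hi).1),
        (hnice i).resolve_left (mem_filter.1 hi).2⟩
  refine ⟨#{i ∈ R | #(C i) = b}, x, y, z, ?_, ?_, by simpa using hu, by simpa using hv⟩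
  · have hR := card_filter_add_card_filter_not (s := R) fun i ↦ #(C i) = b
    rw [card_erase_of_mem (mem_univ _), card_univ, Fintype.card_fin] at hR
    simp only [← ne_eq] at hR
    omega
  · have hE := hCp.sum_card_eq.trans_le hC'.card_edgeFinset_le
    rw [Fintype.card_fin, ← sum_erase_add _ _ (mem_univ (Fin.last n)),
      ← sum_filter_add_sum_filter_not R fun i ↦ #(C i) = b,
      sum_congr rfl fun i hi ↦ (mem_filter.1 hi).2, sum_const, smul_eq_mul] at hE
    simp only [← ne_eq] at hE
    have := card_pos.2 (hne (Fin.last n))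
    have hxy : (x + 1) * (y + 1) = x * y + x + y + 1 := by ring
    omega

theorem add_add_sub_one_mul_sq_sub_le {T a c z : ℝ} (hc : 1 ≤ c) (hca : c ≤ a)
    (hz : 0 ≤ z) : (a + c + z - 1) * T ^ 2 - (a * c + 2 * z) ≤ 2 * T * (T - 1) * (a + z) := by
  have hid : 2 * T * (T - 1) * (a + z) - ((a + c + z - 1) * T ^ 2 - (a * c + 2 * z)) =
      z * ((T - 1) ^ 2 + 1) + ((T - a) ^ 2 + (a - c) * (T ^ 2 - a)) := by ring
  have hpos : 0 ≤ (T - a) ^ 2 + (a - c) * (T ^ 2 - a) := by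
    rcases le_total a (T ^ 2) with h | h
    · exact add_nonneg (sq_nonneg _) (mul_nonneg (by linarith) (by linarith))
    · -- `(T - a)² + (a - 1)(T² - a) = a (T - 1)²`
      nlinarith [mul_nonneg (by linarith : (0 : ℝ) ≤ a) (sq_nonneg (T - 1))]
  nlinarith [mul_nonneg hz (add_nonneg (sq_nonneg (T - 1)) zero_le_one)]

theorem natCast_add_le_three_sub_mul {F x y z K b : ℕ}
    (h : F * b + ((x + 1) * (y + 1) + 2 * z) ≤ K * b) (hx : x + z + 1 ≤ K)
    (hy : y + z + 1 ≤ K) : ((F + x + y + z + 1 : ℕ) : ℝ) ≤ (3 - 2 / √b) * K := by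
  have hb : 1 ≤ b := Nat.one_le_iff_ne_zero.2 (by rintro rfl; simp at h)
  set T := √(b : ℝ)
  have hT : 1 ≤ T := Real.one_le_sqrt.2 (by exact_mod_cast hb)
  have hT2 : T ^ 2 = b := Real.sq_sqrt (Nat.cast_nonneg b)
  have h' : (F : ℝ) * T ^ 2 + ((x + 1) * (y + 1) + 2 * z) ≤ K * T ^ 2 := by
    rw [hT2]; exact_mod_cast h
  have hbound : ∀ a c : ℝ, 1 ≤ c → c ≤ a → a + z ≤ K →
      (a + c + z - 1) * T ^ 2 - (a * c + 2 * z) ≤ 2 * T * (T - 1) * K := fun a c hc hca haK ↦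
    (add_add_sub_one_mul_sq_sub_le hc hca (Nat.cast_nonneg z)).trans
      (mul_le_mul_of_nonneg_left haK (by nlinarith))
  have hkey : ((x : ℝ) + 1 + (y + 1) + z - 1) * T ^ 2 - ((x + 1) * (y + 1) + 2 * z) ≤
      2 * T * (T - 1) * K := by
    rcases le_total x y with hxy | hxy
    · have := hbound (y + 1) (x + 1) (by simp) (by exact_mod_cast Nat.succ_le_succ hxy)
        (by exact_mod_cast (by omega : y + 1 + z ≤ K))
      linarith
    · exact hbound (x + 1) (y + 1) (by simp) (by exact_mod_cast Nat.succ_le_succ hxy)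
        (by exact_mod_cast (by omega : x + 1 + z ≤ K))
  have hT0 : 0 < T ^ 2 := by positivity
  rw [show 3 - 2 / T = (3 * T ^ 2 - 2 * T) / T ^ 2 by field_simp, div_mul_eq_mul_div,
    le_div_iff₀ hT0]
  push_cast
  linarith

end

theorem stmt_8_general {α : Type*} [Fintype α] [DecidableEq α] (G : SimpleGraph α) [DecidableRel G.Adj]
    (U : Set α) (hbip : ∀ u v : α, G.Adj u v → (u ∈ U ↔ v ∉ U))
    (b : ℕ)
    (k k' : ℕ) (C : Fin k → Finset (Sym2 α)) (C' : Fin k' → Finset (Sym2 α))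
    (hC : IsNiceBddEC G b C) (hC' : IsBddProperEC G b C') :
    (k : ℝ) ≤ (3 - 2 / Real.sqrt b) * (k' : ℝ) := by
  obtain _ | n := k
  · have hb : 2 / √(b : ℝ) ≤ 2 := by
      rcases Nat.eq_zero_or_pos b with rfl | hb
      · simp
      · exact div_le_self zero_le_two (Real.one_le_sqrt.2 (by exact_mod_cast hb))
    simpa using mul_nonneg (by linarith : (0 : ℝ) ≤ 3 - 2 / √b) (Nat.cast_nonneg k')
  obtain ⟨F, x, y, z, rfl, h, hx, hy⟩ := hC.exists_card_bounds hbip hC'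
  exact_mod_cast natCast_add_le_three_sub_mul h hx hy

/-- If a bipartite graph `G` with at least one edge has a nice `b`-bounded edge coloring with
`k` classes and some `b`-bounded proper edge coloring with `k'` classes, then
`k ≤ (3 − 2/√b)·k'`. -/
theorem stmt_8 {α : Type*} [Fintype α] [DecidableEq α] (G : SimpleGraph α) [DecidableRel G.Adj]
    (U : Set α) (hbip : ∀ u v : α, G.Adj u v → (u ∈ U ↔ v ∉ U))
    (hE : G.edgeFinset.Nonempty) (b : ℕ) (hb : 0 < b)
    (k k' : ℕ) (C : Fin k → Finset (Sym2 α)) (C' : Fin k' → Finset (Sym2 α))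
    (hC : IsNiceBddEC G b C) (hC' : IsBddProperEC G b C') :
    (k : ℝ) ≤ (3 - 2 / Real.sqrt b) * (k' : ℝ) :=
  stmt_8_general G U hbip b k k' C C' hC hC'
end

section
/- Let G be a finite simple bipartite graph with edge weight function w : E(G) → ℕ and let b be a positive integer. Then the total weight of every greedy (first-fit) b-bounded edge coloring of G is at most (3 − 2/√b)·OPT, where OPT is the minimum total weight of a b-bounded proper edge coloring of G. -/
open Finset

/-!
For integer weights, `∑ᵢ weightᵢ = ∑_{x ≥ 1} #{i | x ≤ weightᵢ}`, so it suffices to fix a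
threshold `x` and compare the number of greedy classes containing a heavy edge (weight `≥ x`)
with the number `t` of optimal classes that do. There are at most `t * b` heavy edges, and at
most `t` of them meet any vertex.

Let `uv` be a heavy edge in the last greedy class that has one. When `uv` was placed, every earlier
class was either full, hence holds `b` heavy edges, or blocked `uv` by a heavy edge at `u` or at
`v`. If `q < r` are non-full classes with heavy edges only at `u` and only at `v` respectively, and
`vz` blocked `uv` in `r`, then `q` blocked `vz` at `z`; by bipartiteness these edges of `q` are
distinct for distinct `r` and avoid `u`. With `F` full classes and `a`, `β`, `γ` non-full ones
with heavy edges only at `u`, only at `v`, or at both, this yields `F b + a + β + 2γ + aβ + 1`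
heavy edges, while the degrees at `u` and `v` give `a + γ + 1 ≤ t` and `β + γ + 1 ≤ t`;
optimising over `a, β, γ` bounds the number `F + a + β + γ + 1` of heavy greedy classes by
`(3 - 2/√b) t`.
-/

lemma sum_eq_sum_Icc_card_filter_le {ι : Type*} [Fintype ι] (f : ι → ℕ) {M : ℕ}
    (hM : ∀ i, f i ≤ M) : ∑ i, f i = ∑ x ∈ Icc 1 M, #{i | x ≤ f i} := by
  simp only [card_filter]
  rw [sum_comm]
  refine sum_congr rfl fun i _ => ?_
  rw [← card_filter, show {x ∈ Icc 1 M | x ≤ f i} = Icc 1 (f i) by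
    ext x; simp only [mem_filter, mem_Icc]; have := hM i; omega]
  simp

lemma sum_le_mul_sum_of_card_filter_le {ι κ : Type*} [Fintype ι] [Fintype κ]
    (f : ι → ℕ) (g : κ → ℕ) (ρ : ℝ)
    (h : ∀ x, 1 ≤ x → (#{i | x ≤ f i} : ℝ) ≤ ρ * #{j | x ≤ g j}) :
    ∑ i, (f i : ℝ) ≤ ρ * ∑ j, (g j : ℝ) := by
  set M := univ.sup f ⊔ univ.sup g
  have hf : ∀ i, f i ≤ M := fun i => le_sup_of_le_left (le_sup (mem_univ i))
  have hg : ∀ j, g j ≤ M := fun j => le_sup_of_le_right (le_sup (mem_univ j))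
  calc ∑ i, (f i : ℝ) = ∑ x ∈ Icc 1 M, (#{i | x ≤ f i} : ℝ) := by
        exact_mod_cast sum_eq_sum_Icc_card_filter_le f hf
    _ ≤ ∑ x ∈ Icc 1 M, ρ * #{j | x ≤ g j} := sum_le_sum fun x hx => h x (mem_Icc.1 hx).1
    _ = ρ * ∑ j, (g j : ℝ) := by
        rw [← mul_sum]; congr 1; exact_mod_cast (sum_eq_sum_Icc_card_filter_le g hg).symm

lemma sum_card_filter_lt_add_sum_card_filter_lt {ι : Type*} [LinearOrder ι] {A B : Finset ι}
    (h : Disjoint A B) :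
    ∑ q ∈ A, #{r ∈ B | q < r} + ∑ r ∈ B, #{q ∈ A | r < q} = #A * #B := by
  have hswap : ∑ r ∈ B, #{q ∈ A | r < q} = ∑ q ∈ A, #{r ∈ B | r < q} :=
    (sum_card_bipartiteAbove_eq_sum_card_bipartiteBelow (fun q r => r < q)).symm
  rw [hswap, ← sum_add_distrib, ← smul_eq_mul, ← sum_const]
  refine sum_congr rfl fun q hq => ?_
  rw [← card_filter_add_card_filter_not (s := B) (q < ·)]
  congr 2
  refine filter_congr fun r hr => ?_
  have hne : r ≠ q := fun hrq => disjoint_left.1 h hq (hrq ▸ hr)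
  exact ⟨fun h' => not_lt.2 h'.le, fun h' => lt_of_le_of_ne (not_lt.1 h') hne⟩

lemma three_sub_two_div_sqrt_nonneg {b : ℕ} (hb : 0 < b) : 0 ≤ 3 - 2 / √(b : ℝ) := by
  have : 1 ≤ √(b : ℝ) := Real.one_le_sqrt.2 (by exact_mod_cast hb)
  have : 2 / √(b : ℝ) ≤ 2 := div_le_self zero_le_two this
  linarith

lemma add_one_mul_self_le_three_mul_sub_two_mul {s t a β γ F : ℝ} (hs : 1 ≤ s) (ha : 0 ≤ a)
    (hγ : 0 ≤ γ) (haβ : a ≤ β)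
    (hcap : F * (s * s) + (a + β + 2 * γ + a * β + 1) ≤ t * (s * s))
    (hu : a + γ + 1 ≤ t) (hv : β + γ + 1 ≤ t) :
    (F + a + β + γ + 1) * (s * s) ≤ 3 * t * (s * s) - 2 * t * s := by
  rcases le_or_gt (2 * t) (s * s + 1) with hc | hc
  · nlinarith [mul_nonneg (by nlinarith : (0:ℝ) ≤ t - 1 - a) (by nlinarith : (0:ℝ) ≤ s * s - t - a),
      sq_nonneg (t - s),
      mul_nonneg (by nlinarith : (0:ℝ) ≤ t - β - γ - 1) (by nlinarith : (0:ℝ) ≤ s * s - 1),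
      mul_nonneg (sub_nonneg.2 haβ) ha]
  · nlinarith [sq_nonneg (2 * a - s * s + 1), sq_nonneg ((s - 1) * (s - 1)),
      mul_nonneg (by nlinarith : (0:ℝ) ≤ 2 * t - s * s - 1) (sq_nonneg (s - 1)),
      mul_nonneg (by nlinarith : (0:ℝ) ≤ t - β - γ - 1) (by nlinarith : (0:ℝ) ≤ s * s - 1),
      mul_nonneg (sub_nonneg.2 haβ) ha, sq_nonneg (t - s)]

lemma add_one_le_three_sub_two_div_sqrt_mul {b t F a β γ : ℕ} (hb : 0 < b)
    (hcap : F * b + (a + β + 2 * γ + a * β + 1) ≤ t * b)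
    (hu : a + γ + 1 ≤ t) (hv : β + γ + 1 ≤ t) :
    ((F + a + β + γ : ℕ) : ℝ) + 1 ≤ (3 - 2 / √(b : ℝ)) * t := by
  set s := √(b : ℝ)
  have hss : s * s = b := Real.mul_self_sqrt b.cast_nonneg
  have hs : 1 ≤ s := Real.one_le_sqrt.2 (by exact_mod_cast hb)
  have hcapR : (F : ℝ) * (s * s) + (a + β + 2 * γ + a * β + 1) ≤ t * (s * s) := by
    rw [hss]; exact_mod_cast hcap
  have huR : (a : ℝ) + γ + 1 ≤ t := by exact_mod_cast hu
  have hvR : (β : ℝ) + γ + 1 ≤ t := by exact_mod_cast hv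
  have key : ((F : ℝ) + a + β + γ + 1) * (s * s) ≤ 3 * t * (s * s) - 2 * t * s := by
    rcases le_total (a : ℝ) β with hab | hab
    · exact add_one_mul_self_le_three_mul_sub_two_mul hs (by positivity) (by positivity) hab
        hcapR huR hvR
    · have := add_one_mul_self_le_three_mul_sub_two_mul hs (by positivity) (by positivity) hab
        (by linarith : (F : ℝ) * (s * s) + (β + a + 2 * γ + β * a + 1) ≤ t * (s * s)) hvR huR
      linarith
  have hs0 : 0 < s * s := by positivity
  rw [show (3 - 2 / s) * t = (3 * t * (s * s) - 2 * t * s) / (s * s) by field_simp, le_div_iff₀ hs0]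
  push_cast
  linarith

def HasHeavyAt {α ι : Type*} (C : ι → Finset (Sym2 α)) (w : Sym2 α → ℕ) (x : ℕ) (i : ι)
    (y : α) : Prop :=
  ∃ g ∈ C i, x ≤ w g ∧ y ∈ g

section ProperEC

variable {α : Type*} [Fintype α] [DecidableEq α] {G : SimpleGraph α} [DecidableRel G.Adj]
  {ι : Type*} {C : ι → Finset (Sym2 α)}

lemma IsProperEC.eq_of_mem_s10 (hC : IsProperEC G C) {i j : ι} {g : Sym2 α} (hi : g ∈ C i)
    (hj : g ∈ C j) : i = j := by
  obtain ⟨_, _, huniq⟩ := hC.1 g (hC.2.1 i hi)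
  exact (huniq i hi).trans (huniq j hj).symm

lemma IsProperEC.eq_of_mem_of_mem (hC : IsProperEC G C) {i : ι} {g g' : Sym2 α} (hg : g ∈ C i)
    (hg' : g' ∈ C i) {y : α} (hy : y ∈ g) (hy' : y ∈ g') : g = g' := by
  by_contra hne
  exact hC.2.2 i g hg g' hg' hne ⟨y, hy, hy'⟩

lemma IsBddProperEC.card_heavy_le [Fintype ι] {b : ℕ} (hC : IsBddProperEC G b C) (w : Sym2 α → ℕ)
    (x : ℕ) : #{g ∈ G.edgeFinset | x ≤ w g} ≤ #{i | x ≤ (C i).sup w} * b := by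
  calc #{g ∈ G.edgeFinset | x ≤ w g} ≤ #(({i | x ≤ (C i).sup w} : Finset ι).biUnion C) := by
        refine card_le_card fun g hg => ?_
        obtain ⟨hgE, hgx⟩ := mem_filter.1 hg
        obtain ⟨i, hi, -⟩ := hC.1.1 g hgE
        exact mem_biUnion.2 ⟨i, mem_filter.2 ⟨mem_univ i, hgx.trans (le_sup hi)⟩, hi⟩
    _ ≤ ∑ i ∈ {i | x ≤ (C i).sup w}, #(C i) := card_biUnion_le
    _ ≤ _ := by simpa using sum_le_card_nsmul _ _ b fun i _ => hC.2 i

lemma IsProperEC.card_heavy_mem_le [Fintype ι] (hC : IsProperEC G C) (w : Sym2 α → ℕ) (x : ℕ)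
    (y : α) : #{g ∈ G.edgeFinset | x ≤ w g ∧ y ∈ g} ≤ #{i | x ≤ (C i).sup w} := by
  calc #{g ∈ G.edgeFinset | x ≤ w g ∧ y ∈ g}
      ≤ #(({i | x ≤ (C i).sup w} : Finset ι).biUnion fun i => {g ∈ C i | y ∈ g}) := by
        refine card_le_card fun g hg => ?_
        obtain ⟨hgE, hgx, hyg⟩ := mem_filter.1 hg
        obtain ⟨i, hi, -⟩ := hC.1 g hgE
        exact mem_biUnion.2 ⟨i, mem_filter.2 ⟨mem_univ i, hgx.trans (le_sup hi)⟩,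
          mem_filter.2 ⟨hi, hyg⟩⟩
    _ ≤ ∑ i ∈ {i | x ≤ (C i).sup w}, #{g ∈ C i | y ∈ g} := card_biUnion_le
    _ ≤ ∑ i ∈ {i | x ≤ (C i).sup w}, 1 := sum_le_sum fun i _ => card_le_one.2 fun g hg g' hg' =>
        hC.eq_of_mem_of_mem (mem_filter.1 hg).1 (mem_filter.1 hg').1 (mem_filter.1 hg).2
          (mem_filter.1 hg').2
    _ = _ := by simp

lemma IsProperEC.sum_card_heavy_le (hC : IsProperEC G C) (w : Sym2 α → ℕ) (x : ℕ)
    (S : Finset ι) : ∑ i ∈ S, #{g ∈ C i | x ≤ w g} ≤ #{g ∈ G.edgeFinset | x ≤ w g} := by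
  rw [← card_biUnion fun i _ j _ hij => disjoint_left.2 fun g hi hj =>
    hij (hC.eq_of_mem_s10 (mem_filter.1 hi).1 (mem_filter.1 hj).1)]
  refine card_le_card fun g hg => ?_
  obtain ⟨i, -, hgi⟩ := mem_biUnion.1 hg
  exact mem_filter.2 ⟨hC.2.1 i (mem_filter.1 hgi).1, (mem_filter.1 hgi).2⟩

lemma IsProperEC.card_le_card_heavy_mem (hC : IsProperEC G C) (w : Sym2 α → ℕ) (x : ℕ) (y : α)
    {S : Finset ι} (hS : ∀ i ∈ S, HasHeavyAt C w x i y) :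
    #S ≤ #{g ∈ G.edgeFinset | x ≤ w g ∧ y ∈ g} := by
  refine card_le_card_of_forall_subsingleton (fun i g => g ∈ C i) (fun i hi => ?_)
    fun g _ i hi j hj => hC.eq_of_mem_s10 hi.2 hj.2
  obtain ⟨g, hg, hgx, hyg⟩ := hS i hi
  exact ⟨g, mem_filter.2 ⟨hC.2.1 i hg, hgx, hyg⟩, hg⟩

end ProperEC

lemma Sym2.two_le_card_of_mem {α : Type*} {s : Finset (Sym2 α)} {u v : α} (huv : u ≠ v)
    (hs : s(u, v) ∉ s) {g g' : Sym2 α} (hg : g ∈ s) (hg' : g' ∈ s) (hu : u ∈ g) (hv : v ∈ g') :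
    2 ≤ #s :=
  one_lt_card.2 ⟨g, hg, g', hg', fun h => hs ((Sym2.mem_and_mem_iff huv).1 ⟨hu, h ▸ hv⟩ ▸ hg)⟩

lemma eq_of_adj_of_mem_edgeSet {α : Type*} {G : SimpleGraph α} {U : Set α}
    (hbip : ∀ u v : α, G.Adj u v → (u ∈ U ↔ v ∉ U)) {g : Sym2 α} (hg : g ∈ G.edgeSet)
    {v z z' : α} (hz : G.Adj v z) (hz' : G.Adj v z') (h : z ∈ g) (h' : z' ∈ g) : z = z' := by
  by_contra hne
  rw [(Sym2.mem_and_mem_iff hne).1 ⟨h, h'⟩, SimpleGraph.mem_edgeSet] at hg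
  have := hbip _ _ hg
  have := hbip _ _ hz
  have := hbip _ _ hz'
  tauto

def placedBefore {k m : ℕ} (c : Fin m → Fin k) (j : Fin m) (i : Fin k) : Finset (Fin m) :=
  {l | l < j ∧ c l = i}

@[simp]
lemma mem_placedBefore {k m : ℕ} {c : Fin m → Fin k} {j l : Fin m} {i : Fin k} :
    l ∈ placedBefore c j i ↔ l < j ∧ c l = i := by
  simp [placedBefore]

namespace IsGreedyEC

variable {α : Type*} [Fintype α] [DecidableEq α] {G : SimpleGraph α} [DecidableRel G.Adj]
  {w : Sym2 α → ℕ} {b k m : ℕ} {C : Fin k → Finset (Sym2 α)} {e : Fin m → Sym2 α}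
  {c : Fin m → Fin k}

lemma mem_color (hg : IsGreedyEC G w b C e c) (l : Fin m) : e l ∈ C (c l) := hg.2.2.2.2.1 l

lemma color_eq (hg : IsGreedyEC G w b C e c) {l : Fin m} {i : Fin k} (h : e l ∈ C i) :
    c l = i :=
  hg.1.1.eq_of_mem_s10 (hg.mem_color l) h

lemma exists_index (hg : IsGreedyEC G w b C e c) {i : Fin k} {g : Sym2 α} (h : g ∈ C i) :
    ∃ l, e l = g :=
  (hg.2.2.1 g).1 (hg.1.1.2.1 i h)

lemma weight_le (hg : IsGreedyEC G w b C e c) {l l' : Fin m} (h : l ≤ l') : w (e l') ≤ w (e l) :=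
  hg.2.2.2.1 l l' h

lemma adj (hg : IsGreedyEC G w b C e c) {l : Fin m} {u v : α} (h : e l = s(u, v)) : G.Adj u v := by
  rw [← SimpleGraph.mem_edgeSet, ← h, ← SimpleGraph.mem_edgeFinset]
  exact hg.1.1.2.1 _ (hg.mem_color l)

lemma card_placedBefore_le (hg : IsGreedyEC G w b C e c) (j : Fin m) (i : Fin k) :
    #(placedBefore c j i) ≤ b :=
  (card_le_card_of_injOn e (fun l hl => (mem_placedBefore.1 hl).2 ▸ hg.mem_color l)
    hg.2.1.injOn).trans (hg.1.2 i)

lemma card_placedBefore_eq_of_le (hg : IsGreedyEC G w b C e c) {j j' : Fin m} (hjj' : j ≤ j')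
    {i : Fin k} (h : #(placedBefore c j i) = b) : #(placedBefore c j' i) = b := by
  refine le_antisymm (hg.card_placedBefore_le j' i) (h ▸ card_le_card fun l hl => ?_)
  rw [mem_placedBefore] at hl ⊢
  exact ⟨hl.1.trans_le hjj', hl.2⟩

lemma exists_blocker (hg : IsGreedyEC G w b C e c) {j : Fin m} {i : Fin k} (hi : i < c j)
    (hfree : #(placedBefore c j i) ≠ b) : ∃ l < j, c l = i ∧ ∃ y ∈ e j, y ∈ e l := by
  obtain ⟨l, hl, hcl, -, y, hyl, hyj⟩ := (hg.2.2.2.2.2 j i hi).resolve_left hfree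
  exact ⟨l, hl, hcl, y, hyj, hyl⟩

variable {x : ℕ} {l₀ : Fin m} {u v : α}

lemma hasHeavyAt_of_le (hg : IsGreedyEC G w b C e c) (hl₀ : x ≤ w (e l₀)) {l : Fin m}
    (hl : l ≤ l₀) {y : α} (hy : y ∈ e l) : HasHeavyAt C w x (c l) y :=
  ⟨e l, hg.mem_color l, hl₀.trans (hg.weight_le hl), hy⟩

lemma le_card_heavy_of_full (hg : IsGreedyEC G w b C e c) (hl₀ : x ≤ w (e l₀)) {i : Fin k}
    (hfull : #(placedBefore c l₀ i) = b) : b ≤ #{g ∈ C i | x ≤ w g} :=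
  hfull ▸ card_le_card_of_injOn e (fun l hl => by
    obtain ⟨hlt, rfl⟩ := mem_placedBefore.1 hl
    exact mem_filter.2 ⟨hg.mem_color l, hl₀.trans (hg.weight_le hlt.le)⟩) hg.2.1.injOn

lemma hasHeavyAt_of_lt (hg : IsGreedyEC G w b C e c) (hl₀ : x ≤ w (e l₀))
    (huv : e l₀ = s(u, v)) {i : Fin k} (hi : i < c l₀) (hfree : #(placedBefore c l₀ i) ≠ b) :
    HasHeavyAt C w x i u ∨ HasHeavyAt C w x i v := by
  obtain ⟨l, hl, rfl, y, hy, hyl⟩ := hg.exists_blocker hi hfree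
  have hheavy := hg.hasHeavyAt_of_le hl₀ hl.le hyl
  rw [huv, Sym2.mem_iff] at hy
  rcases hy with rfl | rfl
  exacts [Or.inl hheavy, Or.inr hheavy]

lemma exists_hasHeavyAt_of_lt_of_lt (hg : IsGreedyEC G w b C e c) (hl₀ : x ≤ w (e l₀))
    (huv : e l₀ = s(u, v)) {q r : Fin k} (hqr : q < r) (hr : r < c l₀)
    (hqfree : #(placedBefore c l₀ q) ≠ b) (hrfree : #(placedBefore c l₀ r) ≠ b)
    (hqv : ¬HasHeavyAt C w x q v) (hru : ¬HasHeavyAt C w x r u) :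
    ∃ z, (∃ l, c l = r ∧ e l = s(v, z)) ∧ HasHeavyAt C w x q z := by
  obtain ⟨l, hl, hcl, y, hy, hyl⟩ := hg.exists_blocker hr hrfree
  rw [huv, Sym2.mem_iff] at hy
  obtain ⟨z, hz⟩ : ∃ z, e l = s(v, z) := by
    rcases hy with rfl | rfl
    · exact (hru (hcl ▸ hg.hasHeavyAt_of_le hl₀ hl.le hyl)).elim
    · exact Sym2.mem_iff_exists.1 hyl
  refine ⟨z, ⟨l, hcl, hz⟩, ?_⟩
  obtain ⟨l', hl', rfl, y', hy', hyl'⟩ :=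
    hg.exists_blocker (hcl ▸ hqr) fun h => hqfree (hg.card_placedBefore_eq_of_le hl.le h)
  have hheavy := hg.hasHeavyAt_of_le hl₀ (hl'.trans hl).le hyl'
  rw [hz, Sym2.mem_iff] at hy'
  rcases hy' with rfl | rfl
  exacts [(hqv hheavy).elim, hheavy]

lemma card_add_one_le_card_heavy (hg : IsGreedyEC G w b C e c) {U : Set α}
    (hbip : ∀ u v : α, G.Adj u v → (u ∈ U ↔ v ∉ U)) (hl₀ : x ≤ w (e l₀))
    (huv : e l₀ = s(u, v)) {q : Fin k} (hqfree : #(placedBefore c l₀ q) ≠ b)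
    (hqu : HasHeavyAt C w x q u) (hqv : ¬HasHeavyAt C w x q v) {R : Finset (Fin k)}
    (hR : ∀ r ∈ R, q < r ∧ r < c l₀ ∧ #(placedBefore c l₀ r) ≠ b ∧ ¬HasHeavyAt C w x r u) :
    #R + 1 ≤ #{g ∈ C q | x ≤ w g} := by
  have hvu : G.Adj v u := (hg.adj huv).symm
  have hcross : #R ≤ #{g ∈ {g ∈ C q | x ≤ w g} | u ∉ g} := by
    refine card_le_card_of_forall_subsingleton
      (fun r g => ∃ z, (∃ l, c l = r ∧ e l = s(v, z)) ∧ z ∈ g) (fun r hr => ?_) ?_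
    · obtain ⟨hqr, hr, hrfree, hru⟩ := hR r hr
      obtain ⟨z, ⟨l, rfl, hz⟩, g, hgC, hgx, hzg⟩ :=
        hg.exists_hasHeavyAt_of_lt_of_lt hl₀ huv hqr hr hqfree hrfree hqv hru
      refine ⟨g, mem_filter.2 ⟨mem_filter.2 ⟨hgC, hgx⟩, fun hug => hr.ne ?_⟩, z, ⟨l, rfl, hz⟩, hzg⟩
      have hzu : z = u := eq_of_adj_of_mem_edgeSet hbip (SimpleGraph.mem_edgeFinset.1
        (hg.1.1.2.1 q hgC)) (hg.adj hz) hvu hzg hug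
      rw [hg.2.1 (hz.trans (hzu ▸ Sym2.eq_swap.trans huv.symm))]
    · rintro g hg' r₁ ⟨-, z₁, ⟨l₁, rfl, hz₁⟩, hzg₁⟩ r₂ ⟨-, z₂, ⟨l₂, rfl, hz₂⟩, hzg₂⟩
      have hgE := SimpleGraph.mem_edgeFinset.1 (hg.1.1.2.1 q (mem_filter.1 (mem_filter.1 hg').1).1)
      have hz : z₁ = z₂ := eq_of_adj_of_mem_edgeSet hbip hgE (hg.adj hz₁) (hg.adj hz₂) hzg₁ hzg₂
      rw [hg.2.1 (hz₁.trans (hz ▸ hz₂.symm))]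
  obtain ⟨g, hgC, hgx, hug⟩ := hqu
  have hu : 1 ≤ #{g ∈ {g ∈ C q | x ≤ w g} | u ∈ g} :=
    card_pos.2 ⟨g, mem_filter.2 ⟨mem_filter.2 ⟨hgC, hgx⟩, hug⟩⟩
  rw [← card_filter_add_card_filter_not (s := {g ∈ C q | x ≤ w g}) (u ∈ ·)]
  omega

lemma card_add_one_le_card_heavy_mem (hg : IsGreedyEC G w b C e c) (hl₀ : x ≤ w (e l₀))
    {y : α} (hy : y ∈ e l₀) {S : Finset (Fin k)} (hS : ∀ i ∈ S, i < c l₀ ∧ HasHeavyAt C w x i y) :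
    #S + 1 ≤ #{g ∈ G.edgeFinset | x ≤ w g ∧ y ∈ g} := by
  have h := hg.1.1.card_le_card_heavy_mem w x y (S := insert (c l₀) S) fun i hi => by
    rcases mem_insert.1 hi with rfl | hi
    exacts [⟨e l₀, hg.mem_color l₀, hl₀, hy⟩, (hS i hi).2]
  rwa [card_insert_of_notMem fun h => (hS _ h).1.false] at h

lemma le_sum_card_heavy_of_free (hg : IsGreedyEC G w b C e c) {U : Set α}
    (hbip : ∀ u v : α, G.Adj u v → (u ∈ U ↔ v ∉ U)) (hl₀ : x ≤ w (e l₀))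
    (huv : e l₀ = s(u, v)) {A B Both : Finset (Fin k)}
    (hA : ∀ i ∈ A, i < c l₀ ∧ #(placedBefore c l₀ i) ≠ b ∧ HasHeavyAt C w x i u ∧
      ¬HasHeavyAt C w x i v)
    (hB : ∀ i ∈ B, i < c l₀ ∧ #(placedBefore c l₀ i) ≠ b ∧ HasHeavyAt C w x i v ∧
      ¬HasHeavyAt C w x i u)
    (hBoth : ∀ i ∈ Both, i < c l₀ ∧ HasHeavyAt C w x i u ∧ HasHeavyAt C w x i v) :
    #A + #B + 2 * #Both + #A * #B ≤ ∑ i ∈ Both, #{g ∈ C i | x ≤ w g} +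
      ∑ i ∈ B, #{g ∈ C i | x ≤ w g} + ∑ i ∈ A, #{g ∈ C i | x ≤ w g} := by
  have hBoth2 : #Both * 2 ≤ ∑ i ∈ Both, #{g ∈ C i | x ≤ w g} := by
    refine (smul_eq_mul _ _).symm.trans_le (card_nsmul_le_sum _ _ 2 fun i hi => ?_)
    obtain ⟨hi, ⟨g, hgC, hgx, hug⟩, ⟨g', hg'C, hg'x, hvg'⟩⟩ := hBoth i hi
    refine Sym2.two_le_card_of_mem (hg.adj huv).ne (fun h => hi.ne ?_)
      (mem_filter.2 ⟨hgC, hgx⟩) (mem_filter.2 ⟨hg'C, hg'x⟩) hug hvg'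
    exact (hg.color_eq (huv ▸ (mem_filter.1 h).1)).symm
  have hAcross : ∑ q ∈ A, (#{r ∈ B | q < r} + 1) ≤ ∑ q ∈ A, #{g ∈ C q | x ≤ w g} :=
    sum_le_sum fun q hq => hg.card_add_one_le_card_heavy hbip hl₀ huv (hA q hq).2.1
      (hA q hq).2.2.1 (hA q hq).2.2.2 fun r hr =>
        ⟨(mem_filter.1 hr).2, (hB r (mem_filter.1 hr).1).1, (hB r (mem_filter.1 hr).1).2.1,
          (hB r (mem_filter.1 hr).1).2.2.2⟩
  have hBcross : ∑ r ∈ B, (#{q ∈ A | r < q} + 1) ≤ ∑ r ∈ B, #{g ∈ C r | x ≤ w g} :=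
    sum_le_sum fun r hr => hg.card_add_one_le_card_heavy hbip hl₀ (huv.trans Sym2.eq_swap)
      (hB r hr).2.1 (hB r hr).2.2.1 (hB r hr).2.2.2 fun q hq =>
        ⟨(mem_filter.1 hq).2, (hA q (mem_filter.1 hq).1).1, (hA q (mem_filter.1 hq).1).2.1,
          (hA q (mem_filter.1 hq).1).2.2.2⟩
  have hpairs := sum_card_filter_lt_add_sum_card_filter_lt
    (disjoint_left.2 fun i hiA hiB => (hA i hiA).2.2.2 (hB i hiB).2.2.1 : Disjoint A B)
  rw [sum_add_distrib, sum_const, smul_eq_mul, mul_one] at hAcross hBcross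
  linarith

lemma exists_counts_of_free (hg : IsGreedyEC G w b C e c) {U : Set α}
    (hbip : ∀ u v : α, G.Adj u v → (u ∈ U ↔ v ∉ U)) (hl₀ : x ≤ w (e l₀))
    (huv : e l₀ = s(u, v)) {S : Finset (Fin k)}
    (hS : ∀ i ∈ S, i < c l₀ ∧ #(placedBefore c l₀ i) ≠ b) :
    ∃ a β γ : ℕ, #S = a + β + γ ∧
      a + β + 2 * γ + a * β ≤ ∑ i ∈ S, #{g ∈ C i | x ≤ w g} ∧
      a + γ + 1 ≤ #{g ∈ G.edgeFinset | x ≤ w g ∧ u ∈ g} ∧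
      β + γ + 1 ≤ #{g ∈ G.edgeFinset | x ≤ w g ∧ v ∈ g} := by
  classical
  set A := {i ∈ S | ¬HasHeavyAt C w x i v}
  set V := {i ∈ S | HasHeavyAt C w x i v}
  set B := {i ∈ V | ¬HasHeavyAt C w x i u}
  set Both := {i ∈ V | HasHeavyAt C w x i u}
  have hA : ∀ i ∈ A, i < c l₀ ∧ #(placedBefore c l₀ i) ≠ b ∧ HasHeavyAt C w x i u ∧
      ¬HasHeavyAt C w x i v := fun i hi => by
    obtain ⟨hiS, hiv⟩ := mem_filter.1 hi
    obtain ⟨hi, hfree⟩ := hS i hiS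
    exact ⟨hi, hfree, (hg.hasHeavyAt_of_lt hl₀ huv hi hfree).resolve_right hiv, hiv⟩
  have hV : ∀ i ∈ V, i < c l₀ ∧ #(placedBefore c l₀ i) ≠ b ∧ HasHeavyAt C w x i v :=
    fun i hi => ⟨(hS i (mem_filter.1 hi).1).1, (hS i (mem_filter.1 hi).1).2, (mem_filter.1 hi).2⟩
  have hB : ∀ i ∈ B, i < c l₀ ∧ #(placedBefore c l₀ i) ≠ b ∧ HasHeavyAt C w x i v ∧
      ¬HasHeavyAt C w x i u := fun i hi => ⟨(hV i (mem_filter.1 hi).1).1,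
    (hV i (mem_filter.1 hi).1).2.1, (hV i (mem_filter.1 hi).1).2.2, (mem_filter.1 hi).2⟩
  have hBoth : ∀ i ∈ Both, i < c l₀ ∧ HasHeavyAt C w x i u ∧ HasHeavyAt C w x i v :=
    fun i hi => ⟨(hV i (mem_filter.1 hi).1).1, (mem_filter.1 hi).2, (hV i (mem_filter.1 hi).1).2.2⟩
  have hV_A : #V + #A = #S := card_filter_add_card_filter_not _
  have hBoth_B : #Both + #B = #V := card_filter_add_card_filter_not _
  refine ⟨#A, #B, #Both, by omega, ?_, ?_, ?_⟩
  · rw [← sum_filter_add_sum_filter_not S (HasHeavyAt C w x · v),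
      ← sum_filter_add_sum_filter_not (s := V) (p := (HasHeavyAt C w x · u))]
    exact hg.le_sum_card_heavy_of_free hbip hl₀ huv hA hB hBoth
  · have hAB : Disjoint A Both :=
      disjoint_left.2 fun i hiA hiB => (hA i hiA).2.2.2 (hBoth i hiB).2.2
    have := hg.card_add_one_le_card_heavy_mem hl₀ (huv ▸ Sym2.mem_mk_left u v) (S := A ∪ Both)
      fun i hi => (mem_union.1 hi).elim (fun hi => ⟨(hA i hi).1, (hA i hi).2.2.1⟩)
        fun hi => ⟨(hBoth i hi).1, (hBoth i hi).2.1⟩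
    rwa [card_union_of_disjoint hAB] at this
  · have := hg.card_add_one_le_card_heavy_mem hl₀ (huv ▸ Sym2.mem_mk_right u v) (S := V)
      fun i hi => ⟨(hV i hi).1, (hV i hi).2.2⟩
    omega

theorem exists_counts (hg : IsGreedyEC G w b C e c) {U : Set α}
    (hbip : ∀ u v : α, G.Adj u v → (u ∈ U ↔ v ∉ U)) (hl₀ : x ≤ w (e l₀))
    (huv : e l₀ = s(u, v)) :
    ∃ F a β γ : ℕ, (c l₀ : ℕ) = F + a + β + γ ∧
      F * b + (a + β + 2 * γ + a * β + 1) ≤ #{g ∈ G.edgeFinset | x ≤ w g} ∧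
      a + γ + 1 ≤ #{g ∈ G.edgeFinset | x ≤ w g ∧ u ∈ g} ∧
      β + γ + 1 ≤ #{g ∈ G.edgeFinset | x ≤ w g ∧ v ∈ g} := by
  set Full := {i ∈ Iio (c l₀) | #(placedBefore c l₀ i) = b}
  set Free := {i ∈ Iio (c l₀) | #(placedBefore c l₀ i) ≠ b}
  obtain ⟨a, β, γ, hcard, hfree, hu, hv⟩ := hg.exists_counts_of_free hbip hl₀ huv (S := Free)
    fun i hi => by simpa [Free] using hi
  have hFull_Free : #Full + #Free = c l₀ :=
    (card_filter_add_card_filter_not _).trans (Fin.card_Iio _)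
  refine ⟨#Full, a, β, γ, by omega, ?_, hu, hv⟩
  have hsum : #{g ∈ C (c l₀) | x ≤ w g} + (∑ i ∈ Full, #{g ∈ C i | x ≤ w g} +
      ∑ i ∈ Free, #{g ∈ C i | x ≤ w g}) ≤ #{g ∈ G.edgeFinset | x ≤ w g} := by
    have h := hg.1.1.sum_card_heavy_le w x (Iic (c l₀))
    rwa [← Iio_insert, sum_insert notMem_Iio_self,
      ← sum_filter_add_sum_filter_not _ (fun i => #(placedBefore c l₀ i) = b)] at h
  have hlast : 1 ≤ #{g ∈ C (c l₀) | x ≤ w g} :=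
    card_pos.2 ⟨e l₀, mem_filter.2 ⟨hg.mem_color l₀, hl₀⟩⟩
  have hFull : #Full * b ≤ ∑ i ∈ Full, #{g ∈ C i | x ≤ w g} :=
    (smul_eq_mul _ _).symm.trans_le <| card_nsmul_le_sum _ _ b fun i hi =>
      hg.le_card_heavy_of_full hl₀ (mem_filter.1 hi).2
  linarith

theorem card_le_three_sub_two_div_sqrt_mul (hg : IsGreedyEC G w b C e c) {U : Set α}
    (hbip : ∀ u v : α, G.Adj u v → (u ∈ U ↔ v ∉ U)) (hb : 0 < b) (hx : 1 ≤ x) {t : ℕ}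
    (hH : #{g ∈ G.edgeFinset | x ≤ w g} ≤ t * b)
    (hdeg : ∀ y, #{g ∈ G.edgeFinset | x ≤ w g ∧ y ∈ g} ≤ t) :
    (#{i | x ≤ (C i).sup w} : ℝ) ≤ (3 - 2 / √(b : ℝ)) * t := by
  rcases eq_empty_or_nonempty ({i | x ≤ (C i).sup w} : Finset (Fin k)) with h | h
  · rw [h, card_empty, Nat.cast_zero]
    exact mul_nonneg (three_sub_two_div_sqrt_nonneg hb) t.cast_nonneg
  obtain ⟨g, hgC, hgx⟩ := (Finset.le_sup_iff hx).1 (mem_filter.1 (max'_mem _ h)).2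
  obtain ⟨l₀, rfl⟩ := hg.exists_index hgC
  obtain ⟨u, v, huv⟩ : ∃ u v, e l₀ = s(u, v) := Sym2.ind (fun u v => ⟨u, v, rfl⟩) (e l₀)
  obtain ⟨F, a, β, γ, hcol, hcap, hu, hv⟩ := hg.exists_counts hbip hgx huv
  have hle : #{i | x ≤ (C i).sup w} ≤ (c l₀ : ℕ) + 1 := by
    rw [← Fin.card_Iic, hg.color_eq hgC]
    exact card_le_card fun i hi => mem_Iic.2 (le_max' _ i hi)
  calc (#{i | x ≤ (C i).sup w} : ℝ) ≤ ((F + a + β + γ : ℕ) : ℝ) + 1 := by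
        rw [← hcol]; exact_mod_cast hle
    _ ≤ _ := add_one_le_three_sub_two_div_sqrt_mul hb (hcap.trans hH) ((hu.trans (hdeg u)))
        (hv.trans (hdeg v))

end IsGreedyEC

/-- The total weight of every greedy (first-fit) `b`-bounded edge coloring of a bipartite
graph `G` is at most `(3 − 2/√b)` times the total weight of every `b`-bounded proper edge
coloring of `G` (in particular, at most `(3 − 2/√b)·OPT`). -/
theorem stmt_10 {α : Type*} [Fintype α] [DecidableEq α] (G : SimpleGraph α) [DecidableRel G.Adj]
    (U : Set α) (hbip : ∀ u v : α, G.Adj u v → (u ∈ U ↔ v ∉ U))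
    (w : Sym2 α → ℕ) (b : ℕ) (hb : 0 < b)
    (k m : ℕ) (C : Fin k → Finset (Sym2 α)) (e : Fin m → Sym2 α) (c : Fin m → Fin k)
    (hg : IsGreedyEC G w b C e c) :
    ∀ (k' : ℕ) (C' : Fin k' → Finset (Sym2 α)), IsBddProperEC G b C' →
      (∑ i, (((C i).sup w : ℕ) : ℝ)) ≤ (3 - 2 / Real.sqrt b) * ∑ i, (((C' i).sup w : ℕ) : ℝ) := by
  intro k' C' hC'
  exact sum_le_mul_sum_of_card_filter_le _ _ _ fun x hx =>
    hg.card_le_three_sub_two_div_sqrt_mul hbip hb hx (hC'.card_heavy_le w x)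
      (hC'.1.card_heavy_mem_le w x)
end
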